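/- Define h(k,n) for 1 ≤ k ≤ n by h(1,n) = 1 and h(k,n) = ∑_{j=k−1}^{n−1} h(k−1, j)/j² for k ≥ 2. Define v(n,k) = (−1)^n (2k)! · 2^{2(n−k)} / (n² C(2n, n)) · h(k,n) for 1 ≤ k ≤ n and v(n,k)=0 otherwise. Then v(n,n) = (−1)^n for all n ≥ 1, and for n ≥ 2, 1 ≤ k ≤ n: v(n,k) = −(2k(2k−1)/(2n(2n−1))) v(n−1, k−1) − (4(n−1)²/(2n(2n−1))) v(n−1, k). -/

import Mathlib

/-- The numbers h(k,n): h(1,n) = 1 and h(k,n) = ∑_{j=k-1}^{n-1} h(k-1,j)/j². -/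
def hNum : ℕ → ℕ → ℚ
  | 0, _ => 0
  | 1, _ => 1
  | (k + 2), n => ∑ j ∈ Finset.Icc (k + 1) (n - 1), hNum (k + 1) j / (j : ℚ) ^ 2

/-- v(n,k) = (−1)^n (2k)! 2^{2(n−k)} h(k,n) / (n² C(2n,n)) for 1 ≤ k ≤ n, else 0. -/
def vEnt (n k : ℕ) : ℚ :=
  if 1 ≤ k ∧ k ≤ n then
    (-1 : ℚ) ^ n * ((2 * k).factorial : ℚ) * 2 ^ (2 * (n - k)) /
      ((n : ℚ) ^ 2 * ((2 * n).choose n)) * hNum k n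
  else 0

/-!
Extending the formula for `vEnt n k` to `k = 0` and `k = n + 1`, where it vanishes because
`h(0, n) = 0` and `h(n + 1, n) = 0`, and writing `2^{2(n-k)}` as the integer power `4^(n-k)`,
the recurrence becomes uniform in `k`. After cancelling the common factors with
`(n + 1) C(2n+2, n+1) = 2 (2n + 1) C(2n, n)` it is exactly the defining recursion
`h(k+1, n+1) = h(k+1, n) + h(k, n) / n²`. The diagonal value follows from
`h(n+1, n+1) = 1 / (n!)²` and `(2n)! = C(2n, n) (n!)²`.
-/

open Nat

lemma hNum_eq_zero_of_lt {k n : ℕ} (hk : 2 ≤ k) (hn : n < k) : hNum k n = 0 := by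
  obtain ⟨j, rfl⟩ : ∃ j, k = j + 2 := ⟨k - 2, by omega⟩
  rw [hNum, Finset.Icc_eq_empty (by omega), Finset.sum_empty]

lemma hNum_succ_succ {k n : ℕ} (hkn : k ≤ n) :
    hNum (k + 1) (n + 1) = hNum (k + 1) n + hNum k n / (n : ℚ) ^ 2 := by
  rcases k with _ | k
  · simp [hNum]
  obtain ⟨m, rfl⟩ : ∃ m, n = m + 1 := ⟨n - 1, by omega⟩
  rw [hNum, hNum]
  exact Finset.sum_Icc_succ_top (by omega) _

lemma hNum_self (n : ℕ) : hNum (n + 1) (n + 1) = ((n ! : ℚ) ^ 2)⁻¹ := by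
  induction n with
  | zero => simp [hNum]
  | succ n ih =>
    rw [hNum_succ_succ le_rfl, hNum_eq_zero_of_lt (by omega) (by omega), ih, factorial_succ]
    push_cast
    field_simp
    ring

lemma vEnt_eq {n k : ℕ} (hn : 1 ≤ n) (hk : k ≤ n + 1) :
    vEnt n k = (-1 : ℚ) ^ n * ((2 * k)! : ℚ) * (4 : ℚ) ^ ((n : ℤ) - k) /
      ((n : ℚ) ^ 2 * ((2 * n).choose n)) * hNum k n := by
  unfold vEnt
  split_ifs with h
  · rw [show (n : ℤ) - k = ((n - k : ℕ) : ℤ) by omega, zpow_natCast, pow_mul]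
    norm_num
  · obtain rfl | rfl : k = 0 ∨ k = n + 1 := by omega
    · simp [hNum]
    · simp [hNum_eq_zero_of_lt (show 2 ≤ n + 1 by omega) (lt_add_one n)]

lemma sq_mul_choose_succ (n : ℕ) :
    ((n + 1 : ℕ) : ℚ) ^ 2 * ((2 * (n + 1)).choose (n + 1) : ℕ)
      = 2 * (n + 1) * (2 * (n + 1) - 1) * ((2 * n).choose n : ℕ) := by
  have h := succ_mul_centralBinom_succ n
  rw [centralBinom_eq_two_mul_choose, centralBinom_eq_two_mul_choose] at h
  have h' : ((n : ℚ) + 1) * ((2 * (n + 1)).choose (n + 1) : ℕ)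
      = 2 * (2 * n + 1) * ((2 * n).choose n : ℕ) := by exact_mod_cast h
  push_cast
  linear_combination ((n : ℚ) + 1) * h'

lemma vEnt_self {n : ℕ} (hn : 1 ≤ n) : vEnt n n = (-1 : ℚ) ^ n := by
  obtain ⟨m, rfl⟩ : ∃ m, n = m + 1 := ⟨n - 1, by omega⟩
  have hfact := add_choose_mul_factorial_mul_factorial (m + 1) (m + 1)
  rw [← two_mul] at hfact
  have hC : (((2 * (m + 1)).choose (m + 1) : ℕ) : ℚ) ≠ 0 :=
    Nat.cast_ne_zero.mpr (choose_pos (by omega)).ne'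
  rw [vEnt_eq hn (by omega), hNum_self, sub_self, zpow_zero, ← hfact, factorial_succ]
  push_cast
  field_simp

lemma vEnt_succ_succ {n k : ℕ} (hn : 1 ≤ n) (hk : k ≤ n) :
    vEnt (n + 1) (k + 1) =
      -((2 * (k + 1) * (2 * (k + 1) - 1) : ℚ) / (2 * (n + 1) * (2 * (n + 1) - 1))) * vEnt n k
        - (4 * (n : ℚ) ^ 2 / (2 * (n + 1) * (2 * (n + 1) - 1))) * vEnt n (k + 1) := by
  have hC : (((2 * n).choose n : ℕ) : ℚ) ≠ 0 :=
    Nat.cast_ne_zero.mpr (choose_pos (by omega)).ne'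
  have hden : (2 * ((n : ℚ) + 1) - 1) ≠ 0 := by
    rw [show 2 * ((n : ℚ) + 1) - 1 = 2 * n + 1 by ring]; positivity
  have hfact : ((2 * (k + 1))! : ℚ) = (2 * k + 2) * (2 * k + 1) * ((2 * k)! : ℚ) := by
    rw [show 2 * (k + 1) = 2 * k + 1 + 1 by ring, factorial_succ, factorial_succ]
    push_cast; ring
  have hpow : (4 : ℚ) ^ ((n : ℤ) - (k + 1 : ℕ)) = (4 : ℚ) ^ ((n : ℤ) - k) / 4 := by
    rw [Nat.cast_succ, ← sub_sub, zpow_sub_one₀ (by norm_num), div_eq_mul_inv]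
  have hexp : ((n + 1 : ℕ) : ℤ) - (k + 1 : ℕ) = n - k := by push_cast; ring
  rw [vEnt_eq (by omega) (by omega), vEnt_eq hn (by omega), vEnt_eq hn (by omega),
    hNum_succ_succ hk, hfact, hpow, hexp, sq_mul_choose_succ]
  field_simp
  ring

theorem stmt_14 :
    (∀ n : ℕ, 1 ≤ n → vEnt n n = (-1 : ℚ) ^ n) ∧
    (∀ n k : ℕ, 2 ≤ n → 1 ≤ k → k ≤ n →
      vEnt n k = -((2 * k * (2 * k - 1) : ℚ) / (2 * n * (2 * n - 1))) * vEnt (n - 1) (k - 1)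
        - ((4 * ((n : ℚ) - 1) ^ 2) / (2 * n * (2 * n - 1))) * vEnt (n - 1) k) := by
  refine ⟨fun n hn => vEnt_self hn, fun n k hn hk hkn => ?_⟩
  obtain ⟨m, rfl⟩ : ∃ m, n = m + 1 := ⟨n - 1, by omega⟩
  obtain ⟨j, rfl⟩ : ∃ j, k = j + 1 := ⟨k - 1, by omega⟩
  rw [vEnt_succ_succ (by omega) (by omega)]
  push_cast
  simp only [add_sub_cancel_right]
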